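/- arXiv:1709.06559 — 6 statements merged into one kernel-verified Lean document; each statement's English description precedes it below -/
import Mathlib

section
/- Let (L,·) be a loop, A(L) a subgroup of its automorphism group, and H(L) the A(L)-holomorph of (L,·). If H(L) is an Osborn loop, then for all x, y ∈ L and all α ∈ A(L): (α(x)·x^ρ)·(x·y) = α(x)·y, x·(α(x))^ρ = (α(x)·x^ρ)^ρ, and (α(x)·x^ρ)·x = α(x). -/
/-- A loop: a set with multiplication, left and right division, and a
two-sided identity element, such that all translations are bijections
(expressed via the division operations). -/
structure Loop (L : Type*) where
  mul : L → L → L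
  ldiv : L → L → L
  rdiv : L → L → L
  e : L
  mul_ldiv : ∀ x y, mul x (ldiv x y) = y
  ldiv_mul : ∀ x y, ldiv x (mul x y) = y
  rdiv_mul : ∀ x y, mul (rdiv y x) x = y
  mul_rdiv : ∀ x y, rdiv (mul y x) x = y
  e_mul : ∀ x, mul e x = x
  mul_e : ∀ x, mul x e = x

namespace Loop

variable {L : Type*} (Q : Loop L)

/-- The left inverse `x^λ`, the unique element with `x^λ · x = e`. -/
def linv (x : L) : L := Q.rdiv Q.e x

/-- The right inverse `x^ρ`, the unique element with `x · x^ρ = e`. -/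
def rinv (x : L) : L := Q.ldiv x Q.e

/-- A loop is Osborn if `x·((y·z)·x) = (x·((y·x^λ)·x))·(z·x)` for all `x,y,z`. -/
def IsOsborn : Prop :=
  ∀ x y z, Q.mul x (Q.mul (Q.mul y z) x) =
    Q.mul (Q.mul x (Q.mul (Q.mul y (Q.linv x)) x)) (Q.mul z x)

/-- The automorphism group of a loop, as a subgroup of the permutation group. -/
def autGroup : Subgroup (Equiv.Perm L) where
  carrier := {α | ∀ x y, α (Q.mul x y) = Q.mul (α x) (α y)}
  one_mem' := fun _ _ => rfl
  mul_mem' := by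
    intro α β ha hb x y
    simp only [Equiv.Perm.mul_apply]
    rw [hb x y, ha]
  inv_mem' := by
    intro α ha x y
    apply α.injective
    rw [ha]
    simp

theorem mem_autGroup_iff {α : Equiv.Perm L} :
    α ∈ Q.autGroup ↔ ∀ x y, α (Q.mul x y) = Q.mul (α x) (α y) := Iff.rfl

theorem aut_fix_e {α : Equiv.Perm L} (hα : α ∈ Q.autGroup) : α Q.e = Q.e := by
  have h1 : α (Q.mul Q.e Q.e) = Q.mul (α Q.e) (α Q.e) := hα Q.e Q.e
  rw [Q.mul_e] at h1
  have h2 : Q.mul (α Q.e) (α Q.e) = Q.mul (α Q.e) Q.e := by rw [Q.mul_e, ← h1]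
  have h3 := congrArg (Q.ldiv (α Q.e)) h2
  rwa [Q.ldiv_mul, Q.ldiv_mul] at h3

/-- The `A`-holomorph of a loop `(L,·)`: the loop on `A × L` with multiplication
`(α,x)∘(β,y) = (α∘β, β(x)·y)`, where `A` is a subgroup of the automorphism group. -/
def Holomorph (A : Subgroup (Equiv.Perm L)) (hA : A ≤ Q.autGroup) : Loop (A × L) where
  mul p q := (p.1 * q.1, Q.mul ((q.1 : Equiv.Perm L) p.2) q.2)
  ldiv p r := (p.1⁻¹ * r.1, Q.ldiv (((p.1⁻¹ * r.1 : A) : Equiv.Perm L) p.2) r.2)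
  rdiv r q := (r.1 * q.1⁻¹, ((q.1⁻¹ : A) : Equiv.Perm L) (Q.rdiv r.2 q.2))
  e := (1, Q.e)
  mul_ldiv p r := by
    refine Prod.ext ?_ ?_
    · simp
    · simp [Q.mul_ldiv]
  ldiv_mul p q := by
    refine Prod.ext ?_ ?_
    · simp
    · simp [inv_mul_cancel_left, Q.ldiv_mul]
  rdiv_mul r q := by
    refine Prod.ext ?_ ?_
    · simp
    · simp [Q.rdiv_mul]
  mul_rdiv p q := by
    refine Prod.ext ?_ ?_
    · simp
    · simp [Q.mul_rdiv]
  e_mul p := by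
    refine Prod.ext ?_ ?_
    · simp
    · simp [Q.aut_fix_e (hA p.1.2), Q.e_mul]
  mul_e p := by
    refine Prod.ext ?_ ?_
    · simp
    · simp [Q.mul_e]

/-- A triple `(A,B,C)` of bijections of `L` is an autotopism of `(L,·)` if
`A(x)·B(y) = C(x·y)` for all `x, y`. -/
def IsAutotopism (A B C : L → L) : Prop :=
  Function.Bijective A ∧ Function.Bijective B ∧ Function.Bijective C ∧
    ∀ x y, Q.mul (A x) (B y) = C (Q.mul x y)

/-- A bijection `U` is ρ-regular if `(I,U,U)` is an autotopism. -/
def IsRhoRegular (U : L → L) : Prop := Q.IsAutotopism id U U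

/-- A bijection `U` is λ-regular if `(U,I,U)` is an autotopism. -/
def IsLambdaRegular (U : L → L) : Prop := Q.IsAutotopism U id U

/-- `U'` is an adjoint of the bijection `U` if `(U, U'⁻¹, I)` is an autotopism. -/
def IsMuAdjoint (U U' : L → L) : Prop :=
  letI : Nonempty L := ⟨Q.e⟩
  Function.Bijective U' ∧ Q.IsAutotopism U (Function.invFun U') id

/-- `U` is μ-regular if it has an adjoint, i.e. `(U, U'⁻¹, I)` is an
autotopism for some bijection `U'`. The μ-regular bijections form `Φ(L,·)`. -/
def IsMuRegular (U : L → L) : Prop := ∃ U', Q.IsMuAdjoint U U'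

/-- `U'` belongs to `Ψ(L,·)`, the group of adjoints of μ-regular bijections. -/
def IsPsi (U' : L → L) : Prop := ∃ U, Q.IsMuAdjoint U U'

/-- Membership in the left nucleus `N_λ`. -/
def InNlambda (a : L) : Prop := ∀ y z, Q.mul a (Q.mul y z) = Q.mul (Q.mul a y) z

/-- Membership in the middle nucleus `N_μ`. -/
def InNmu (a : L) : Prop := ∀ y z, Q.mul (Q.mul y a) z = Q.mul y (Q.mul a z)

/-- Membership in the right nucleus `N_ρ`. -/
def InNrho (a : L) : Prop := ∀ y z, Q.mul (Q.mul y z) a = Q.mul y (Q.mul z a)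

/-- Membership in the nucleus `N = N_λ ∩ N_μ ∩ N_ρ`. -/
def InNucleus (a : L) : Prop := Q.InNlambda a ∧ Q.InNmu a ∧ Q.InNrho a

/-- Membership in the center `Z = N ∩ C`. -/
def InCenter (a : L) : Prop := Q.InNucleus a ∧ ∀ x, Q.mul a x = Q.mul x a

end Loop

/-! In the `A`-holomorph, the Osborn law at `(α,x), (α,u), (α⁻¹, α⁻¹t)` projects onto the
twisted law `α(x)·((u·t)·x) = (α(x)·((u·x^λ)·x))·(t·x)` in `L`; for `α = 1` this is the Osborn
law of `L` itself. Choosing `u` with `(u·x^λ)·x = x^ρ` and `t` with `t·x = x·y`, the untwisted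
law forces `(u·t)·x = y`, and the twisted one becomes `α(x)·y = (α(x)·x^ρ)·(x·y)`. The other two
identities are the cases `y = α(x)^ρ` and `y = e`. -/

namespace Loop

variable {L : Type*} (Q : Loop L)

theorem mul_rinv (x : L) : Q.mul x (Q.rinv x) = Q.e := Q.mul_ldiv x Q.e

theorem mul_left_cancel {x a b : L} (h : Q.mul x a = Q.mul x b) : a = b := by
  rw [← Q.ldiv_mul x a, h, Q.ldiv_mul]

theorem eq_rinv_of_mul_eq_e {a b : L} (h : Q.mul a b = Q.e) : b = Q.rinv a :=
  Q.mul_left_cancel (h.trans (Q.mul_rinv a).symm)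

def IsOsbornAt (a x : L) : Prop :=
  ∀ u t, Q.mul a (Q.mul (Q.mul u t) x) =
    Q.mul (Q.mul a (Q.mul (Q.mul u (Q.linv x)) x)) (Q.mul t x)

theorem isOsbornAt_of_isOsborn_holomorph {A : Subgroup (Equiv.Perm L)} {hA : A ≤ Q.autGroup}
    (hO : (Q.Holomorph A hA).IsOsborn) (β : A) (x : L) :
    Q.IsOsbornAt ((β : Equiv.Perm L) x) x := by
  intro u t
  have hβ : ∀ a b, (β : Equiv.Perm L) (Q.mul a b) =
      Q.mul ((β : Equiv.Perm L) a) ((β : Equiv.Perm L) b) := hA β.2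
  have h := congrArg Prod.snd (hO (β, x) (β, u) (β⁻¹, ((β⁻¹ : A) : Equiv.Perm L) t))
  simp only [Loop.Holomorph, Loop.linv] at h
  simpa only [mul_assoc, one_mul, mul_one, inv_mul_cancel, mul_inv_cancel, hβ,
    InvMemClass.coe_inv, OneMemClass.coe_one, Equiv.Perm.coe_inv, Equiv.apply_symm_apply,
    Equiv.symm_apply_apply, Equiv.Perm.one_apply, Loop.linv] using h

theorem mul_rinv_mul_mul_of_isOsbornAt {a x : L} (ha : Q.IsOsbornAt a x)
    (hx : Q.IsOsbornAt x x) (y : L) :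
    Q.mul (Q.mul a (Q.rinv x)) (Q.mul x y) = Q.mul a y := by
  set u := Q.rdiv (Q.rdiv (Q.rinv x) x) (Q.linv x)
  set t := Q.rdiv (Q.mul x y) x
  have hu : Q.mul (Q.mul u (Q.linv x)) x = Q.rinv x := by rw [Q.rdiv_mul, Q.rdiv_mul]
  have ht : Q.mul t x = Q.mul x y := Q.rdiv_mul _ _
  have hut : Q.mul (Q.mul u t) x = y := by
    apply Q.mul_left_cancel (x := x)
    rw [hx u t, hu, ht, Q.mul_rinv, Q.e_mul]
  rw [← hu, ← ht, ← ha u t, hut]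

end Loop

/-- If `H(L)` is an Osborn loop, then for all `x, y ∈ L` and all
`α ∈ A(L)`: `(α(x)·x^ρ)·(x·y) = α(x)·y`, `x·(α(x))^ρ = (α(x)·x^ρ)^ρ`, and
`(α(x)·x^ρ)·x = α(x)`. -/
theorem holomorph_osborn_identities_alpha {L : Type*} (Q : Loop L)
    (A : Subgroup (Equiv.Perm L)) (hA : A ≤ Q.autGroup) :
    (Q.Holomorph A hA).IsOsborn →
      ∀ (x y : L) (α : A),
        Q.mul (Q.mul ((α : Equiv.Perm L) x) (Q.rinv x)) (Q.mul x y) = Q.mul ((α : Equiv.Perm L) x) y ∧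
        Q.mul x (Q.rinv ((α : Equiv.Perm L) x)) = Q.rinv (Q.mul ((α : Equiv.Perm L) x) (Q.rinv x)) ∧
        Q.mul (Q.mul ((α : Equiv.Perm L) x) (Q.rinv x)) x = ((α : Equiv.Perm L) x) := by
  intro hO x y α
  have h : ∀ y, Q.mul (Q.mul ((α : Equiv.Perm L) x) (Q.rinv x)) (Q.mul x y) =
      Q.mul ((α : Equiv.Perm L) x) y :=
    Q.mul_rinv_mul_mul_of_isOsbornAt (Q.isOsbornAt_of_isOsborn_holomorph hO α x)
      (Q.isOsbornAt_of_isOsborn_holomorph hO 1 x)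
  refine ⟨h y, Q.eq_rinv_of_mul_eq_e ((h _).trans (Q.mul_rinv _)), ?_⟩
  simpa only [Q.mul_e] using h Q.e
end

section
/- Let (L,·) be a loop, A(L) a subgroup of its automorphism group, and H(L) the A(L)-holomorph of (L,·). If H(L) is an Osborn loop, then for all x, y ∈ L and all φ ∈ A(L): x·((y/x)·φ⁻¹(x)) = ((x·y)/x)·φ⁻¹(x), and x·((x^ρ/x)·φ⁻¹(x)) = x^λ·φ⁻¹(x). -/
/-!
Osborn's identity in `H(L)` with `Z = (1, e)`, evaluated at `X = (φ, φ⁻¹x)` and `Y = (1, φ⁻¹u)`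
and read in the second coordinate, says `x·(u·φ⁻¹x) = (x·((u·x^λ)·x))·φ⁻¹x`. Since `L` embeds
in `H(L)` as `a ↦ (1, a)`, `L` is Osborn too, and Osborn's identity in `L` with `z = e` gives
`x·((u·x^λ)·x) = (x·(u·x))/x`. Taking `u = y/x` yields the first identity; `y = x^ρ` turns it
into the second because `x·x^ρ = e` and `e/x = x^λ`.
-/

namespace Loop

variable {L : Type*} (Q : Loop L)

theorem rdiv_eq_of_mul_eq {a b c : L} (h : Q.mul c b = a) : Q.rdiv a b = c := by
  rw [← h, Q.mul_rdiv]

theorem map_rdiv_of_mem_autGroup {α : Equiv.Perm L} (hα : α ∈ Q.autGroup) (a b : L) :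
    α (Q.rdiv a b) = Q.rdiv (α a) (α b) :=
  (Q.rdiv_eq_of_mul_eq (by rw [← hα, Q.rdiv_mul])).symm

theorem map_linv_of_mem_autGroup {α : Equiv.Perm L} (hα : α ∈ Q.autGroup) (a : L) :
    α (Q.linv a) = Q.linv (α a) := by
  rw [linv, Q.map_rdiv_of_mem_autGroup hα, Q.aut_fix_e hα, linv]

variable {Q}

theorem IsOsborn.mul_mul_linv_mul (hQ : Q.IsOsborn) (x u : L) :
    Q.mul x (Q.mul (Q.mul u (Q.linv x)) x) = Q.rdiv (Q.mul x (Q.mul u x)) x :=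
  (Q.rdiv_eq_of_mul_eq (by simpa only [Q.mul_e, Q.e_mul] using (hQ x u Q.e).symm)).symm

section Holomorph

variable {A : Subgroup (Equiv.Perm L)} {hA : A ≤ Q.autGroup}

theorem holomorph_mul (p q : A × L) :
    (Q.Holomorph A hA).mul p q = (p.1 * q.1, Q.mul ((q.1 : Equiv.Perm L) p.2) q.2) := rfl

theorem holomorph_linv (p : A × L) :
    (Q.Holomorph A hA).linv p = (p.1⁻¹, ((p.1⁻¹ : A) : Equiv.Perm L) (Q.linv p.2)) := by
  simp [Loop.linv, Loop.Holomorph]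

theorem IsOsborn.of_holomorph (hO : (Q.Holomorph A hA).IsOsborn) : Q.IsOsborn := by
  intro a b c
  simpa [holomorph_mul, holomorph_linv] using congrArg Prod.snd (hO (1, a) (1, b) (1, c))

theorem IsOsborn.holomorph_mul_mul_apply (hO : (Q.Holomorph A hA).IsOsborn) (ψ : A) (x u : L) :
    Q.mul x (Q.mul u ((ψ : Equiv.Perm L) x)) =
      Q.mul (Q.mul x (Q.mul (Q.mul u (Q.linv x)) x)) ((ψ : Equiv.Perm L) x) := by
  have hψ : ∀ a b,
      Q.mul ((ψ : Equiv.Perm L) a) ((ψ : Equiv.Perm L) b) = (ψ : Equiv.Perm L) (Q.mul a b) :=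
    fun a b => (hA ψ.2 a b).symm
  have hψe : (ψ : Equiv.Perm L).symm Q.e = Q.e := by
    rw [Equiv.symm_apply_eq, Q.aut_fix_e (hA ψ.2)]
  have h := congrArg Prod.snd (hO (ψ⁻¹, (ψ : Equiv.Perm L) x) (1, (ψ : Equiv.Perm L) u) (1, Q.e))
  simpa [holomorph_mul, holomorph_linv, Q.mul_e, Q.e_mul, hψ, hψe,
    ← Q.map_linv_of_mem_autGroup (hA ψ.2)] using h

theorem IsOsborn.holomorph_mul_rdiv_mul_apply (hO : (Q.Holomorph A hA).IsOsborn) (ψ : A)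
    (x y : L) :
    Q.mul x (Q.mul (Q.rdiv y x) ((ψ : Equiv.Perm L) x)) =
      Q.mul (Q.rdiv (Q.mul x y) x) ((ψ : Equiv.Perm L) x) := by
  rw [hO.holomorph_mul_mul_apply, (hO.of_holomorph).mul_mul_linv_mul, Q.rdiv_mul]

end Holomorph

end Loop

/-- If `H(L)` is an Osborn loop, then for all `x, y ∈ L` and all
`φ ∈ A(L)`: `x·((y/x)·φ⁻¹(x)) = ((x·y)/x)·φ⁻¹(x)` and
`x·((x^ρ/x)·φ⁻¹(x)) = x^λ·φ⁻¹(x)`. -/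
theorem holomorph_osborn_identities_phi_div {L : Type*} (Q : Loop L)
    (A : Subgroup (Equiv.Perm L)) (hA : A ≤ Q.autGroup) :
    (Q.Holomorph A hA).IsOsborn →
      ∀ (x y : L) (φ : A),
        Q.mul x (Q.mul (Q.rdiv y x) (((φ⁻¹ : A) : Equiv.Perm L) x)) = Q.mul (Q.rdiv (Q.mul x y) x) (((φ⁻¹ : A) : Equiv.Perm L) x) ∧
        Q.mul x (Q.mul (Q.rdiv (Q.rinv x) x) (((φ⁻¹ : A) : Equiv.Perm L) x)) = Q.mul (Q.linv x) (((φ⁻¹ : A) : Equiv.Perm L) x) := by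
  intro hO x y φ
  refine ⟨hO.holomorph_mul_rdiv_mul_apply φ⁻¹ x y, ?_⟩
  rw [hO.holomorph_mul_rdiv_mul_apply φ⁻¹ x (Q.rinv x), Q.mul_rinv, Loop.linv]
end

section
/- Let (L,·) be a loop, A(L) a subgroup of its automorphism group, and H(L) the A(L)-holomorph of (L,·). If H(L) is an Osborn loop, then for every x ∈ L and all α ∈ A(L): the bijections y ↦ α(x)·(x\y) and y ↦ (α(x)·x^ρ)·y are λ-regular, and there exists a λ-regular bijection U with α(x)·y = U(x·y) for all y ∈ L. -/
/-!
Evaluating the Osborn identity of the holomorph at `X = (1,u)`, `Y = (β,y)`, `Z = (1,z)` gives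
`β(u)·((y·z)·u) = (β(u)·((y·u^λ)·u))·(z·u)`, i.e. the Osborn identity of `L` at `u` with the
outer left factor `u` replaced by `β(u)`. Comparing this with the Osborn identity of `L` itself
(the case `β = 1`) shows that `w ↦ β(u)·(u\w)` satisfies `U(a)·b = U(a·b)`: every `a, b` arise
as `a = u·((y·u^λ)·u)`, `b = z·u`, and then `u\(a·b) = (y·z)·u`.
-/

namespace Loop

variable {L : Type*} (Q : Loop L)

theorem mul_left_bijective (c : L) : Function.Bijective (Q.mul c) :=
  Function.bijective_iff_has_inverse.mpr ⟨Q.ldiv c, Q.ldiv_mul c, Q.mul_ldiv c⟩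

theorem ldiv_left_bijective (u : L) : Function.Bijective (Q.ldiv u) :=
  Function.bijective_iff_has_inverse.mpr ⟨Q.mul u, Q.mul_ldiv u, Q.ldiv_mul u⟩

theorem isLambdaRegular_of_bijective {U : L → L} (hU : Function.Bijective U)
    (h : ∀ a b, Q.mul (U a) b = U (Q.mul a b)) : Q.IsLambdaRegular U :=
  ⟨hU, Function.bijective_id, hU, h⟩

theorem IsLambdaRegular.apply_eq_mul {Q : Loop L} {U : L → L} (hU : Q.IsLambdaRegular U)
    (b : L) : U b = Q.mul (U Q.e) b := by
  simpa only [id, Q.e_mul] using (hU.2.2.2 Q.e b).symm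

/-- The Osborn identity at `u` with the outer left factor `u` replaced by `c`;
`Q.IsOsborn` says exactly that `Q.OsbornWith u u` holds for every `u`. -/
def OsbornWith (u c : L) : Prop :=
  ∀ y z, Q.mul c (Q.mul (Q.mul y z) u) =
    Q.mul (Q.mul c (Q.mul (Q.mul y (Q.linv u)) u)) (Q.mul z u)

theorem isLambdaRegular_mul_ldiv {u c : L} (hu : Q.OsbornWith u u) (hc : Q.OsbornWith u c) :
    Q.IsLambdaRegular (fun w => Q.mul c (Q.ldiv u w)) := by
  refine Q.isLambdaRegular_of_bijective
    ((Q.mul_left_bijective c).comp (Q.ldiv_left_bijective u)) fun a b => ?_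
  set y := Q.rdiv (Q.rdiv (Q.ldiv u a) u) (Q.linv u)
  set z := Q.rdiv b u
  have hy : Q.mul (Q.mul y (Q.linv u)) u = Q.ldiv u a := by simp only [y, Q.rdiv_mul]
  have hz : Q.mul z u = b := Q.rdiv_mul u b
  have hyz : Q.mul (Q.mul y z) u = Q.ldiv u (Q.mul a b) := by
    rw [← Q.ldiv_mul u (Q.mul (Q.mul y z) u), hu y z, hy, hz, Q.mul_ldiv]
  have hcyz := hc y z
  rwa [hy, hz, hyz, eq_comm] at hcyz

theorem osbornWith_of_holomorph_isOsborn {A : Subgroup (Equiv.Perm L)} (hA : A ≤ Q.autGroup)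
    (hO : (Q.Holomorph A hA).IsOsborn) (β : A) (u : L) :
    Q.OsbornWith u ((β : Equiv.Perm L) u) := by
  intro y z
  simpa [Holomorph, linv, Equiv.Perm.one_def] using congrArg Prod.snd (hO (1, u) (β, y) (1, z))

end Loop

/-- If `H(L)` is an Osborn loop, then for every `x ∈ L` and all
`α ∈ A(L)`: the bijections `y ↦ α(x)·(x\y)` and `y ↦ (α(x)·x^ρ)·y` are λ-regular,
and there exists a λ-regular bijection `U` with `α(x)·y = U(x·y)` for all `y`. -/
theorem holomorph_osborn_lambda_regular {L : Type*} (Q : Loop L)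
    (A : Subgroup (Equiv.Perm L)) (hA : A ≤ Q.autGroup) :
    (Q.Holomorph A hA).IsOsborn →
      ∀ (x : L) (α : A),
        Q.IsLambdaRegular (fun y => Q.mul ((α : Equiv.Perm L) x) (Q.ldiv x y)) ∧
        Q.IsLambdaRegular (fun y => Q.mul (Q.mul ((α : Equiv.Perm L) x) (Q.rinv x)) y) ∧
        ∃ U : L → L, Q.IsLambdaRegular U ∧ ∀ y, Q.mul ((α : Equiv.Perm L) x) y = U (Q.mul x y) := by
  intro hO x α
  have hU := Q.isLambdaRegular_mul_ldiv (Q.osbornWith_of_holomorph_isOsborn hA hO 1 x)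
    (Q.osbornWith_of_holomorph_isOsborn hA hO α x)
  refine ⟨hU, ?_, _, hU, fun y => by rw [Q.ldiv_mul]⟩
  convert hU using 1
  funext y
  exact (hU.apply_eq_mul y).symm
end

section
/- Let (L,·) be a loop, A(L) a subgroup of its automorphism group, and H(L) the A(L)-holomorph of (L,·). If H(L) is an Osborn loop, then for every x ∈ L and all α, φ ∈ A(L): the right translations R_a : y ↦ y·a are μ-regular and the left translations L_a : y ↦ a·y belong to the adjoint group Ψ(L,·), both for a = α(x)·x^ρ and for a = x^λ·φ⁻¹(x). -/
namespace Loop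

variable {L : Type*} (Q : Loop L)

/-! The Osborn identity of `H(L)` at `(1,x), (β,y), (1,z)`, compared with the one at `β = 1`,
shows that `T = L_{β(x)} ∘ L_x⁻¹` satisfies `T(s)·v = T(s·v)`; hence `T = L_a` with
`a = T(e) = β(x)·x^ρ` in the left nucleus. In an Osborn loop the left nucleus lies in the middle
nucleus, and for `a ∈ N_μ` the triple `(R_a, L_a⁻¹, I)` is an autotopism. The second element is
of the first kind: `x^λ·φ⁻¹(x) = φ(u)·u^ρ` for `u = φ⁻¹(x^λ)`. -/

theorem mul_left_cancel_s13 {c u v : L} (h : Q.mul c u = Q.mul c v) : u = v := by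
  simpa only [Q.ldiv_mul] using congrArg (Q.ldiv c) h

theorem mul_right_cancel {c u v : L} (h : Q.mul u c = Q.mul v c) : u = v := by
  simpa only [Q.mul_rdiv] using congrArg (fun t => Q.rdiv t c) h

theorem linv_mul (x : L) : Q.mul (Q.linv x) x = Q.e := Q.rdiv_mul x Q.e

theorem rinv_linv (x : L) : Q.rinv (Q.linv x) = x :=
  Q.mul_left_cancel_s13 ((Q.mul_rinv _).trans (Q.linv_mul x).symm)

theorem map_rinv {α : Equiv.Perm L} (hα : α ∈ Q.autGroup) (x : L) :
    α (Q.rinv x) = Q.rinv (α x) :=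
  Q.mul_left_cancel_s13 <| by rw [← hα, Q.mul_rinv, Q.mul_rinv, Q.aut_fix_e hα]

theorem osborn_twisted_of_holomorph {A : Subgroup (Equiv.Perm L)} {hA : A ≤ Q.autGroup}
    (hO : (Q.Holomorph A hA).IsOsborn) (β : A) (x y z : L) :
    Q.mul ((β : Equiv.Perm L) x) (Q.mul (Q.mul y z) x) =
      Q.mul (Q.mul ((β : Equiv.Perm L) x) (Q.mul (Q.mul y (Q.linv x)) x)) (Q.mul z x) := by
  simpa [Holomorph, linv, ← Equiv.Perm.inv_def] using
    congrArg Prod.snd (hO ((1 : A), x) (β, y) ((1 : A), z))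

theorem isOsborn_of_holomorph {A : Subgroup (Equiv.Perm L)} {hA : A ≤ Q.autGroup}
    (hO : (Q.Holomorph A hA).IsOsborn) : Q.IsOsborn := fun x y z => by
  simpa using Q.osborn_twisted_of_holomorph hO 1 x y z

theorem holomorph_osborn_mul_ldiv {A : Subgroup (Equiv.Perm L)} {hA : A ≤ Q.autGroup}
    (hO : (Q.Holomorph A hA).IsOsborn) (β : A) (x s v : L) :
    Q.mul (Q.mul ((β : Equiv.Perm L) x) (Q.ldiv x s)) v =
      Q.mul ((β : Equiv.Perm L) x) (Q.ldiv x (Q.mul s v)) := by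
  set w := Q.ldiv x s
  set y := Q.rdiv (Q.rdiv w x) (Q.linv x)
  set z := Q.rdiv v x
  have hw : Q.mul (Q.mul y (Q.linv x)) x = w := by simp only [y, Q.rdiv_mul]
  have hv : Q.mul z x = v := Q.rdiv_mul x v
  have hs : Q.mul x w = s := Q.mul_ldiv x s
  have untwisted := Q.isOsborn_of_holomorph hO x y z
  rw [hw, hv, hs] at untwisted
  rw [← untwisted, Q.ldiv_mul, Q.osborn_twisted_of_holomorph hO β x y z, hw, hv]

theorem inNlambda_apply_e_of_map_mul {U : L → L}
    (hU : ∀ s v, Q.mul (U s) v = U (Q.mul s v)) : Q.InNlambda (U Q.e) := by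
  have hUe : ∀ s, U s = Q.mul (U Q.e) s := fun s => by rw [hU, Q.e_mul]
  intro y z
  rw [← hUe, ← hUe, hU]

theorem inNmu_of_inNlambda (hO : Q.IsOsborn) {a : L} (ha : Q.InNlambda a) :
    Q.InNmu a := by
  intro t v
  have h := hO t a (Q.rdiv v t)
  rw [← ha, ← ha, Q.linv_mul, Q.mul_e, Q.rdiv_mul] at h
  exact h.symm

theorem isMuAdjoint_of_inNmu {a : L} (ha : Q.InNmu a) :
    Q.IsMuAdjoint (fun y => Q.mul y a) (fun y => Q.mul a y) := by
  have : Nonempty L := ⟨Q.e⟩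
  have hinv : Function.invFun (fun y => Q.mul a y) = Q.ldiv a :=
    Function.invFun_eq_of_injective_of_rightInverse
      (fun _ _ h => Q.mul_left_cancel_s13 h) (Q.mul_ldiv a)
  refine ⟨⟨fun _ _ => Q.mul_left_cancel_s13, fun v => ⟨_, Q.mul_ldiv a v⟩⟩,
    ⟨fun _ _ => Q.mul_right_cancel, fun v => ⟨_, Q.rdiv_mul a v⟩⟩, ?_,
    Function.bijective_id, fun u v => ?_⟩
  · rw [hinv]
    exact ⟨fun _ _ h => by simpa only [Q.mul_ldiv] using congrArg (Q.mul a) h,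
      fun v => ⟨_, Q.ldiv_mul a v⟩⟩
  · rw [hinv]
    exact (ha u _).trans (by rw [Q.mul_ldiv, id])

theorem inNmu_apply_mul_rinv_of_holomorph {A : Subgroup (Equiv.Perm L)}
    {hA : A ≤ Q.autGroup} (hO : (Q.Holomorph A hA).IsOsborn) (β : A) (x : L) :
    Q.InNmu (Q.mul ((β : Equiv.Perm L) x) (Q.rinv x)) :=
  Q.inNmu_of_inNlambda (Q.isOsborn_of_holomorph hO)
    (Q.inNlambda_apply_e_of_map_mul (Q.holomorph_osborn_mul_ldiv hO β x))

theorem inNmu_linv_mul_apply_of_holomorph {A : Subgroup (Equiv.Perm L)}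
    {hA : A ≤ Q.autGroup} (hO : (Q.Holomorph A hA).IsOsborn) (φ : A) (x : L) :
    Q.InNmu (Q.mul (Q.linv x) (((φ⁻¹ : A) : Equiv.Perm L) x)) := by
  have h := Q.inNmu_apply_mul_rinv_of_holomorph hO φ (((φ⁻¹ : A) : Equiv.Perm L) (Q.linv x))
  rw [← Q.map_rinv (hA (φ⁻¹).2), Q.rinv_linv] at h
  simpa using h

end Loop

/-- If `H(L)` is an Osborn loop, then for every `x ∈ L` and all
`α, φ ∈ A(L)`: the right translations `R_a : y ↦ y·a` are μ-regular and the left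
translations `L_a : y ↦ a·y` belong to the adjoint group `Ψ(L,·)`, both for
`a = α(x)·x^ρ` and for `a = x^λ·φ⁻¹(x)`. -/
theorem holomorph_osborn_mu_regular {L : Type*} (Q : Loop L)
    (A : Subgroup (Equiv.Perm L)) (hA : A ≤ Q.autGroup) :
    (Q.Holomorph A hA).IsOsborn →
      ∀ (x : L) (α φ : A),
        Q.IsMuRegular (fun y => Q.mul y (Q.mul ((α : Equiv.Perm L) x) (Q.rinv x))) ∧
        Q.IsPsi (fun y => Q.mul (Q.mul ((α : Equiv.Perm L) x) (Q.rinv x)) y) ∧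
        Q.IsMuRegular (fun y => Q.mul y (Q.mul (Q.linv x) (((φ⁻¹ : A) : Equiv.Perm L) x))) ∧
        Q.IsPsi (fun y => Q.mul (Q.mul (Q.linv x) (((φ⁻¹ : A) : Equiv.Perm L) x)) y) := by
  intro hO x α φ
  have ha := Q.isMuAdjoint_of_inNmu (Q.inNmu_apply_mul_rinv_of_holomorph hO α x)
  have hb := Q.isMuAdjoint_of_inNmu (Q.inNmu_linv_mul_apply_of_holomorph hO φ x)
  exact ⟨⟨_, ha⟩, ⟨_, ha⟩, ⟨_, hb⟩, ⟨_, hb⟩⟩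
end

section
/- Let (L,·) be a loop, A(L) a subgroup of its automorphism group, and H(L) the A(L)-holomorph of (L,·). If H(L) is an Osborn loop, then for all x, y ∈ L and all α ∈ A(L): α(x)·(x\y) = (α(x)·x^ρ)·y (i.e., as maps, L_x⁻¹ followed by L_{α(x)} equals the left translation by α(x)·x^ρ). -/
/-- If `H(L)` is an Osborn loop, then for all `x, y ∈ L` and all
`α ∈ A(L)`: `α(x)·(x\y) = (α(x)·x^ρ)·y`. -/
theorem holomorph_osborn_left_translation_eq {L : Type*} (Q : Loop L)
    (A : Subgroup (Equiv.Perm L)) (hA : A ≤ Q.autGroup) :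
    (Q.Holomorph A hA).IsOsborn →
      ∀ (x y : L) (α : A),
        Q.mul ((α : Equiv.Perm L) x) (Q.ldiv x y) = Q.mul (Q.mul ((α : Equiv.Perm L) x) (Q.rinv x)) y := by
  intro h x w α
  set y0 := Q.rdiv (Q.rdiv (Q.rinv x) x) (Q.linv x) with hy0
  set z0 := Q.rdiv w x with hz0
  have hyx : Q.mul (Q.mul y0 (Q.linv x)) x = Q.rinv x := by
    rw [hy0, Q.rdiv_mul, Q.rdiv_mul]
  have hzx : Q.mul z0 x = w := Q.rdiv_mul x w
  have key : ∀ β : A, Q.mul ((β : Equiv.Perm L) x) (Q.mul (Q.mul y0 z0) x)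
      = Q.mul (Q.mul ((β : Equiv.Perm L) x) (Q.rinv x)) w := by
    intro β
    have h1 := h ((1 : A), x) ((β : A), y0) ((1 : A), z0)
    have h2 := congrArg Prod.snd h1
    simp only [Loop.Holomorph, Loop.linv, Loop.rinv, Loop.ldiv_mul, Loop.mul_ldiv,
      one_mul, mul_one, inv_one, OneMemClass.coe_one, Equiv.Perm.coe_one, id_eq,
      Loop.IsOsborn] at h2
    rw [show Q.rdiv Q.e x = Q.linv x from rfl, hyx, hzx] at h2
    exact h2
  have key1 := key (1 : A)
  simp only [OneMemClass.coe_one, Equiv.Perm.coe_one, id_eq] at key1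
  have hxr : Q.mul x (Q.rinv x) = Q.e := Q.mul_ldiv x Q.e
  rw [hxr, Q.e_mul] at key1
  have hldiv : Q.mul (Q.mul y0 z0) x = Q.ldiv x w := by
    have := congrArg (Q.ldiv x) key1
    rwa [Q.ldiv_mul] at this
  have := key α
  rwa [hldiv] at this
end

section
/- Let (L,·) be a loop, A(L) a subgroup of its automorphism group, and H(L) the A(L)-holomorph of (L,·). If H(L) is an Osborn loop, then x^λ·φ(x) ∈ N(L,·) for every x ∈ L and every φ ∈ A(L). -/
section Aux

variable {L : Type*} (Q : Loop L)

lemma Loop.mul_right_cancel_s19 {u v c : L} (h : Q.mul u c = Q.mul v c) : u = v := by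
  have := congrArg (fun w => Q.rdiv w c) h
  simpa [Q.mul_rdiv] using this

lemma Loop.linv_mul_s19 (x : L) : Q.mul (Q.linv x) x = Q.e := Q.rdiv_mul x Q.e

lemma Loop.mul_rinv_s19 (x : L) : Q.mul x (Q.rinv x) = Q.e := Q.mul_ldiv x Q.e

lemma Loop.rinv_linv_s19 (x : L) : Q.rinv (Q.linv x) = x := by
  have h := Q.ldiv_mul (Q.linv x) x
  rw [Q.linv_mul_s19] at h
  exact h

lemma Loop.aut_mul {φ : Equiv.Perm L} (hφ : φ ∈ Q.autGroup) (u v : L) :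
    φ (Q.mul u v) = Q.mul (φ u) (φ v) := hφ u v

lemma Loop.aut_linv {φ : Equiv.Perm L} (hφ : φ ∈ Q.autGroup) (u : L) :
    φ (Q.linv u) = Q.linv (φ u) := by
  apply Q.mul_right_cancel_s19 (c := φ u)
  rw [Q.linv_mul_s19, ← Q.aut_mul hφ, Q.linv_mul_s19, Q.aut_fix_e hφ]

lemma Loop.aut_rinv {φ : Equiv.Perm L} (hφ : φ ∈ Q.autGroup) (u : L) :
    φ (Q.rinv u) = Q.rinv (φ u) := by
  have h := Q.ldiv_mul (φ u) (φ (Q.rinv u))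
  rw [← Q.aut_mul hφ, Q.mul_rinv_s19, Q.aut_fix_e hφ] at h
  exact h.symm

/-- The master identity extracted from Osbornness of the holomorph. -/
lemma Loop.master (A : Subgroup (Equiv.Perm L)) (hA : A ≤ Q.autGroup)
    (h : (Q.Holomorph A hA).IsOsborn) (φ : A) (x Y Z : L) :
    Q.mul ((φ : Equiv.Perm L) x) (Q.mul (Q.mul Y Z) x) =
      Q.mul (Q.mul ((φ : Equiv.Perm L) x)
          (Q.mul (Q.mul Y (Q.linv ((φ : Equiv.Perm L) x))) ((φ : Equiv.Perm L) x)))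
        (Q.mul Z x) := by
  have hφ := Q.aut_mul (hA φ.2)
  have key := h ((φ : A), x) ((1 : A), (φ : Equiv.Perm L).symm Y)
      ((1 : A), (φ : Equiv.Perm L).symm Z)
  have k2 := congrArg Prod.snd key
  simp [Loop.Holomorph, Loop.linv, Loop.IsOsborn, hφ, Q.aut_linv (hA φ.2)] at k2
  rw [show (φ : Equiv.Perm L) (Q.rdiv Q.e x) = Q.linv ((φ : Equiv.Perm L) x) from Q.aut_linv (hA φ.2) x] at k2
  exact k2

/-- `Q` itself is Osborn (φ = 1 instance of the master identity). -/
lemma Loop.qosborn (A : Subgroup (Equiv.Perm L)) (hA : A ≤ Q.autGroup)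
    (h : (Q.Holomorph A hA).IsOsborn) : Q.IsOsborn := by
  intro p Y Z
  simpa using Q.master A hA h (1 : A) p Y Z

/-- `φ(x)·x^ρ ∈ N_λ`. -/
lemma Loop.holo_nlambda (A : Subgroup (Equiv.Perm L)) (hA : A ≤ Q.autGroup)
    (h : (Q.Holomorph A hA).IsOsborn) (φ : A) (x : L) :
    Q.InNlambda (Q.mul ((φ : Equiv.Perm L) x) (Q.rinv x)) := by
  have hos := Q.qosborn A hA h
  set t := (φ : Equiv.Perm L) x with ht
  have hT : ∀ u w, Q.mul t (Q.ldiv x (Q.mul u w)) = Q.mul (Q.mul t (Q.ldiv x u)) w := by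
    intro u w
    set Y := Q.rdiv (Q.rdiv (Q.ldiv x u) x) (Q.linv x) with hY
    have hK'Y : Q.mul x (Q.mul (Q.mul Y (Q.linv x)) x) = u := by
      rw [hY, Q.rdiv_mul, Q.rdiv_mul, Q.mul_ldiv]
    have hgen : ∀ w', Q.mul t (Q.ldiv x (Q.mul u w')) =
        Q.mul (Q.mul t (Q.mul (Q.mul Y (Q.linv t)) t)) w' := by
      intro w'
      have h1 := hos x Y (Q.rdiv w' x)
      rw [hK'Y, Q.rdiv_mul] at h1
      have e1 : Q.mul (Q.mul Y (Q.rdiv w' x)) x = Q.ldiv x (Q.mul u w') := by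
        rw [← h1, Q.ldiv_mul]
      have h2 := Q.master A hA h φ x Y (Q.rdiv w' x)
      rw [Q.rdiv_mul, e1, ← ht] at h2
      exact h2
    have hTu := hgen Q.e
    rw [Q.mul_e, Q.mul_e] at hTu
    rw [hgen w, ← hTu]
  have hc : ∀ w, Q.mul t (Q.ldiv x w) = Q.mul (Q.mul t (Q.rinv x)) w := by
    intro w
    have := hT Q.e w
    rwa [Q.e_mul] at this
  intro u w
  rw [← hc (Q.mul u w), hT u w, hc u]

/-- `(φx)^λ·x ∈ N_ρ`. -/
lemma Loop.holo_nrho (A : Subgroup (Equiv.Perm L)) (hA : A ≤ Q.autGroup)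
    (h : (Q.Holomorph A hA).IsOsborn) (φ : A) (x : L) :
    Q.InNrho (Q.mul (Q.linv ((φ : Equiv.Perm L) x)) x) := by
  have hos := Q.qosborn A hA h
  set t := (φ : Equiv.Perm L) x with ht
  have hU : ∀ s w, Q.mul s (Q.mul (Q.rdiv w t) x) =
      Q.mul t (Q.mul (Q.rdiv (Q.ldiv t (Q.mul s w)) t) x) := by
    intro s w
    set Y := Q.rdiv (Q.rdiv (Q.ldiv t s) t) (Q.linv t) with hY
    have hKY : Q.mul t (Q.mul (Q.mul Y (Q.linv t)) t) = s := by
      rw [hY, Q.rdiv_mul, Q.rdiv_mul, Q.mul_ldiv]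
    have h1 := hos t Y (Q.rdiv w t)
    rw [hKY, Q.rdiv_mul] at h1
    have e2 : Q.mul Y (Q.rdiv w t) = Q.rdiv (Q.ldiv t (Q.mul s w)) t := by
      have e1 : Q.mul (Q.mul Y (Q.rdiv w t)) t = Q.ldiv t (Q.mul s w) := by
        rw [← h1, Q.ldiv_mul]
      rw [← e1, Q.mul_rdiv]
    have h2 := Q.master A hA h φ x Y (Q.rdiv w t)
    rw [hKY, e2, ← ht] at h2
    exact h2.symm
  have hUV : ∀ w, Q.mul (Q.rdiv w t) x = Q.mul t (Q.mul (Q.rdiv (Q.ldiv t w) t) x) := by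
    intro w
    have := hU Q.e w
    rwa [Q.e_mul, Q.e_mul] at this
  have key : ∀ s w, Q.mul s (Q.mul (Q.rdiv w t) x) = Q.mul (Q.rdiv (Q.mul s w) t) x := by
    intro s w
    rw [hU s w, ← hUV]
  have hR : ∀ s, Q.mul (Q.rdiv s t) x = Q.mul s (Q.mul (Q.linv t) x) := by
    intro s
    have := key s Q.e
    rw [Q.mul_e] at this
    exact this.symm
  intro s w
  rw [← hR (Q.mul s w), ← key s w, hR w]

/-- In an Osborn loop, `N_λ ⊆ N_μ`. -/
lemma Loop.osborn_nlambda_nmu (hos : Q.IsOsborn) {a : L} (ha : Q.InNlambda a) :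
    Q.InNmu a := by
  intro y z
  have h1 := hos y a (Q.rdiv z y)
  rw [← ha (Q.linv y) y, Q.linv_mul_s19, Q.mul_e, ← ha (Q.rdiv z y) y, Q.rdiv_mul] at h1
  exact h1.symm

end Aux

/-- If `H(L)` is an Osborn loop, then `x^λ·φ(x) ∈ N(L,·)` for
every `x ∈ L` and every `φ ∈ A(L)`. -/
theorem holomorph_osborn_nucleus {L : Type*} (Q : Loop L)
    (A : Subgroup (Equiv.Perm L)) (hA : A ≤ Q.autGroup) :
    (Q.Holomorph A hA).IsOsborn →
      ∀ (x : L) (φ : A), Q.InNucleus (Q.mul (Q.linv x) ((φ : Equiv.Perm L) x)) := by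
  intro h x φ
  have hlam : Q.InNlambda (Q.mul (Q.linv x) ((φ : Equiv.Perm L) x)) := by
    have h1 := Q.holo_nlambda A hA h φ⁻¹ ((φ : Equiv.Perm L) (Q.linv x))
    have e1 : ((φ⁻¹ : A) : Equiv.Perm L) ((φ : Equiv.Perm L) (Q.linv x)) = Q.linv x := by
      simp
    have e2 : Q.rinv ((φ : Equiv.Perm L) (Q.linv x)) = (φ : Equiv.Perm L) x := by
      rw [← Q.aut_rinv (hA φ.2), Q.rinv_linv_s19]
    rwa [e1, e2] at h1
  have hrho : Q.InNrho (Q.mul (Q.linv x) ((φ : Equiv.Perm L) x)) := by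
    have h1 := Q.holo_nrho A hA h φ⁻¹ ((φ : Equiv.Perm L) x)
    have e1 : ((φ⁻¹ : A) : Equiv.Perm L) ((φ : Equiv.Perm L) x) = x := by simp
    rwa [e1] at h1
  exact ⟨hlam, Q.osborn_nlambda_nmu (Q.qosborn A hA h) hlam, hrho⟩
end
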